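/- Let A ⊂ ℝ^d be a finite nonempty set and let μ_A = (1/|A|) Σ_{a∈A} δ_a be the uniform atomic probability measure on A. If a finite set B ⊂ ℝ^d is a spectrum for μ_A, then A is a spectrum for the uniform atomic probability measure μ_B = (1/|B|) Σ_{b∈B} δ_b on B; i.e., {e_a : a ∈ A} is an orthonormal basis of L²(μ_B). -/

import Mathlib

open MeasureTheory Real
open scoped RealInnerProductSpace

/-- The uniform atomic probability measure `μ_A = (1/|A|) ∑_{a ∈ A} δ_a` on a finite set
`A ⊂ ℝ^d`. -/
noncomputable def unifMeasure {d : ℕ} (A : Finset (EuclideanSpace ℝ (Fin d))) :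
    Measure (EuclideanSpace ℝ (Fin d)) :=
  (A.card : ENNReal)⁻¹ • ∑ a ∈ A, Measure.dirac a

/-- A set `B ⊆ ℝ^d` is a spectrum for a Borel measure `μ` on `ℝ^d` if the exponentials
`{e_b : b ∈ B}`, `e_b(x) = e^{2πi b·x}`, form an orthonormal basis of `L²(μ)`. -/
def IsSpectrumFor {d : ℕ} (μ : Measure (EuclideanSpace ℝ (Fin d)))
    (B : Set (EuclideanSpace ℝ (Fin d))) : Prop :=
  ∃ b : HilbertBasis B ℂ (Lp ℂ 2 μ),
    ∀ l : B, (b l : EuclideanSpace ℝ (Fin d) → ℂ) =ᵐ[μ]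
      fun x => Complex.exp (2 * π * Complex.I * (⟪(l : EuclideanSpace ℝ (Fin d)), x⟫ : ℂ))

/-!
The exponentials `e_λ`, `λ ∈ Λ`, form an orthonormal basis of `L²(μ_S)` exactly when `|Λ| = |S|`
and the matrix `M = (e(λ·s))_{s ∈ S, λ ∈ Λ}` satisfies `M* M = |S| · I`, since `L²(μ_S)` is
`|S|`-dimensional and `⟨e_λ, e_λ'⟩ = |S|⁻¹ (M* M)_{λλ'}`. For a spectrum `B` of `μ_A` the matrix
`M` is square, so `M* M = |A| · I` forces `M M* = |A| · I`; as `e(b·a) = e(a·b)`, the matrix for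
the pair `(B, A)` is `Mᵀ`, and `(Mᵀ)* Mᵀ = (M M*)ᵀ = |B| · I` says that `A` is a spectrum of `μ_B`.
-/

open Matrix ComplexConjugate

theorem Matrix.smul_mul_eq_one_comm_of_equiv {m n R : Type*} [Fintype m] [Fintype n]
    [DecidableEq m] [DecidableEq n] [CommRing R] [IsStablyFiniteRing R]
    {A : Matrix m n R} {B : Matrix n m R} (c : R) (e : m ≃ n) :
    c • (A * B) = 1 ↔ c • (B * A) = 1 := by
  simpa only [Matrix.smul_mul, Matrix.mul_smul] using
    mul_eq_one_comm_of_equiv (A := c • A) (B := B) e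

section Exponentials

variable {d : ℕ}

local notation:max "ℝ^" d:max => EuclideanSpace ℝ (Fin d)

noncomputable def expInner (l x : ℝ^d) : ℂ :=
  Complex.exp (2 * π * Complex.I * (⟪l, x⟫ : ℂ))

lemma expInner_comm (l x : ℝ^d) : expInner l x = expInner x l := by
  rw [expInner, expInner, real_inner_comm]

section unifMeasure

variable (S : Finset ℝ^d)

instance : IsFiniteMeasure (unifMeasure S) := by
  constructor
  rcases S.eq_empty_or_nonempty with rfl | hS
  · simp [unifMeasure]
  · simp [unifMeasure, ENNReal.inv_mul_cancel, hS.card_ne_zero]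

lemma ae_unifMeasure_iff {p : ℝ^d → Prop} : (∀ᵐ x ∂unifMeasure S, p x) ↔ ∀ s ∈ S, p s := by
  simp [ae_iff, unifMeasure, Measure.finsetSum_apply, Measure.dirac_apply, Set.indicator]

lemma ae_eq_unifMeasure_iff {β : Type*} {f g : ℝ^d → β} :
    f =ᵐ[unifMeasure S] g ↔ ∀ s ∈ S, f s = g s :=
  ae_unifMeasure_iff S

lemma memLp_unifMeasure {E : Type*} [NormedAddCommGroup E] (f : ℝ^d → E) (p : ENNReal) :
    MemLp f p (unifMeasure S) := by
  have hf : f =ᵐ[unifMeasure S] ∑ s ∈ S, ({s} : Set ℝ^d).indicator (fun _ => f s) := by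
    refine (ae_eq_unifMeasure_iff S).2 fun t ht => ?_
    rw [Finset.sum_apply, Finset.sum_eq_single_of_mem t ht,
      Set.indicator_of_mem (Set.mem_singleton t)]
    intro s _ hst
    exact Set.indicator_of_notMem (Ne.symm hst) _
  refine MemLp.ae_eq hf.symm (memLp_finsetSum' _ fun s _ => ?_)
  exact memLp_indicator_const p (measurableSet_singleton s) (f s) (Or.inr (measure_ne_top _ _))

lemma integral_unifMeasure (f : ℝ^d → ℂ) :
    ∫ x, f x ∂unifMeasure S = (S.card : ℝ)⁻¹ • ∑ s ∈ S, f s := by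
  rw [unifMeasure, integral_smul_measure, integral_finsetSum_measure]
  · simp
  · exact fun s _ => integrable_dirac enorm_lt_top

noncomputable def evalAtoms : Lp ℂ 2 (unifMeasure S) →ₗ[ℂ] (S → ℂ) where
  toFun f s := f s
  map_add' f g := funext fun s => (ae_eq_unifMeasure_iff S).1 (Lp.coeFn_add f g) s s.2
  map_smul' c f := funext fun s => (ae_eq_unifMeasure_iff S).1 (Lp.coeFn_smul c f) s s.2

lemma evalAtoms_bijective : Function.Bijective (evalAtoms S) := by
  classical
  refine ⟨fun f g hfg => Lp.ext ((ae_eq_unifMeasure_iff S).2 fun s hs => congrFun hfg ⟨s, hs⟩),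
    fun v => ?_⟩
  let g : ℝ^d → ℂ := fun x => if hx : x ∈ S then v ⟨x, hx⟩ else 0
  refine ⟨(memLp_unifMeasure S g 2).toLp g, funext fun s => ?_⟩
  have := (ae_eq_unifMeasure_iff S).1 (memLp_unifMeasure S g 2).coeFn_toLp s s.2
  simpa [evalAtoms, g] using this

noncomputable def evalAtomsEquiv : Lp ℂ 2 (unifMeasure S) ≃ₗ[ℂ] (S → ℂ) :=
  LinearEquiv.ofBijective (evalAtoms S) (evalAtoms_bijective S)

instance : FiniteDimensional ℂ (Lp ℂ 2 (unifMeasure S)) :=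
  (evalAtomsEquiv S).symm.finiteDimensional

lemma finrank_Lp_unifMeasure : Module.finrank ℂ (Lp ℂ 2 (unifMeasure S)) = S.card := by
  rw [(evalAtomsEquiv S).finrank_eq, Module.finrank_fintype_fun_eq_card, Fintype.card_coe]

noncomputable def expLp (l : ℝ^d) : Lp ℂ 2 (unifMeasure S) :=
  (memLp_unifMeasure S (expInner l) 2).toLp (expInner l)

lemma coeFn_expLp (l : ℝ^d) : expLp S l =ᵐ[unifMeasure S] expInner l :=
  (memLp_unifMeasure S (expInner l) 2).coeFn_toLp

lemma inner_expLp (l m : ℝ^d) :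
    inner ℂ (expLp S l) (expLp S m) =
      (S.card : ℝ)⁻¹ • ∑ s ∈ S, conj (expInner l s) * expInner m s := by
  rw [MeasureTheory.L2.inner_def, ← integral_unifMeasure]
  refine integral_congr_ae ?_
  filter_upwards [coeFn_expLp S l, coeFn_expLp S m] with x hl hm
  rw [hl, hm, RCLike.inner_apply']

end unifMeasure

noncomputable def expMatrix (S Λ : Finset ℝ^d) : Matrix (S : Set ℝ^d) (Λ : Set ℝ^d) ℂ :=
  fun s l => expInner (l : ℝ^d) s

lemma expMatrix_swap (S Λ : Finset ℝ^d) : expMatrix Λ S = (expMatrix S Λ)ᵀ := by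
  ext l s
  exact expInner_comm (s : ℝ^d) l

lemma orthonormal_expLp_iff (S Λ : Finset ℝ^d) :
    Orthonormal ℂ (fun l : (Λ : Set ℝ^d) => expLp S l) ↔
      (S.card : ℂ)⁻¹ • ((expMatrix S Λ)ᴴ * expMatrix S Λ) = 1 := by
  rw [orthonormal_iff_ite, ← Matrix.ext_iff]
  refine forall₂_congr fun l m => ?_
  rw [inner_expLp, Matrix.smul_apply, mul_apply, one_apply, ← Finset.sum_coe_sort S]
  simp [expMatrix, Complex.real_smul]

lemma isSpectrumFor_unifMeasure_iff (S Λ : Finset ℝ^d) :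
    IsSpectrumFor (unifMeasure S) Λ ↔
      Orthonormal ℂ (fun l : (Λ : Set ℝ^d) => expLp S l) ∧ Λ.card = S.card := by
  constructor
  · rintro ⟨b, hb⟩
    have hb' : ⇑b = fun l : (Λ : Set ℝ^d) => expLp S l :=
      funext fun l => Lp.ext ((hb l).trans (coeFn_expLp S l).symm)
    refine ⟨hb' ▸ b.orthonormal, ?_⟩
    rw [← finrank_Lp_unifMeasure S, Module.finrank_eq_card_basis b.toOrthonormalBasis.toBasis]
    exact (Fintype.card_coe Λ).symm
  · rintro ⟨hON, hcard⟩
    have hspan := hON.linearIndependent.span_eq_top_of_card_eq_finrank' <| by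
      rw [finrank_Lp_unifMeasure, ← hcard]
      exact Fintype.card_coe Λ
    refine ⟨(OrthonormalBasis.mk hON hspan.ge).toHilbertBasis, fun l => ?_⟩
    rw [OrthonormalBasis.coe_toHilbertBasis, OrthonormalBasis.coe_mk]
    exact coeFn_expLp S l

end Exponentials

theorem isSpectrumFor_symm_general {d : ℕ}
    (A : Finset (EuclideanSpace ℝ (Fin d)))
    (B : Finset (EuclideanSpace ℝ (Fin d)))
    (hB : IsSpectrumFor (unifMeasure A) (B : Set (EuclideanSpace ℝ (Fin d)))) :
    IsSpectrumFor (unifMeasure B) (A : Set (EuclideanSpace ℝ (Fin d))) := by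
  obtain ⟨hON, hcard⟩ := (isSpectrumFor_unifMeasure_iff A B).1 hB
  rw [orthonormal_expLp_iff] at hON
  have hcomm : (A.card : ℂ)⁻¹ • (expMatrix A B * (expMatrix A B)ᴴ) = 1 :=
    (smul_mul_eq_one_comm_of_equiv _ (Fintype.equivOfCardEq (by simp [hcard]))).1 hON
  refine (isSpectrumFor_unifMeasure_iff B A).2 ⟨?_, hcard.symm⟩
  rw [orthonormal_expLp_iff, expMatrix_swap, hcard,
    conjTranspose_transpose_eq_transpose_conjTranspose, ← transpose_mul, ← transpose_smul, hcomm,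
    transpose_one]

/-- If a finite set `B ⊂ ℝ^d` is a spectrum for the uniform atomic probability measure `μ_A`
on a finite nonempty set `A ⊂ ℝ^d`, then `A` is a spectrum for the uniform atomic probability
measure `μ_B` on `B`. -/
theorem isSpectrumFor_symm {d : ℕ}
    (A : Finset (EuclideanSpace ℝ (Fin d))) (hA : A.Nonempty)
    (B : Finset (EuclideanSpace ℝ (Fin d)))
    (hB : IsSpectrumFor (unifMeasure A) (B : Set (EuclideanSpace ℝ (Fin d)))) :
    IsSpectrumFor (unifMeasure B) (A : Set (EuclideanSpace ℝ (Fin d))) :=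
  isSpectrumFor_symm_general A B hB
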